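/- The map ι_r : S² → M_N defined via ι(a, e^{ib}) = (e^{ib}ξ(a), e^{−ib}ξ(a), −r e^{if(a)}) (extended over the poles) is injective on S² minus the two poles {a = ±π}, and the two poles are mapped to the same point (0, 0, r); hence ι_r has exactly one double point, and it is a transverse self-intersection. -/

import Mathlib

/-!
Away from the poles `f a ∈ (-π, π)`, so `-r e^{i f a}` is never a positive real and no factor of
`ξ a` vanishes; the third coordinate of `ι` then recovers `e^{i f a}`, hence `f a` and `a`, and the
first coordinate recovers `e^{ib}`. At `a = ±π` the factor `j = r` of `ξ` vanishes. At the double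
point the branch vectors satisfy `ξ₋ = i ξ₊`, because `√(-ri) / √(ri) = e^{iπ/2}` for this branch of
the square root, and the planes spanned by `(w, w, 0), (iw, -iw, 0)` for `w = ξ₊` and `w = i ξ₊` meet
only in `0`: their first two coordinates are `(z w, z̄ w)` and `(i z' w, i z̄' w)`.
-/

open Finset

/-- Square root with branch cut along the positive real axis and `√(-1) = i`. -/
noncomputable def sqrtB (z : ℂ) : ℂ :=
  if z = 0 then 0 else Complex.exp (Complex.log (-z) / 2) * Complex.I

open Complex
open scoped Real

lemma sqrtB_ne_zero {z : ℂ} (hz : z ≠ 0) : sqrtB z ≠ 0 := by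
  rw [sqrtB, if_neg hz]
  exact mul_ne_zero (exp_ne_zero _) I_ne_zero

lemma sqrtB_neg_of_im_pos {z : ℂ} (hz : 0 < z.im) : sqrtB (-z) = I * sqrtB z := by
  have hz0 : z ≠ 0 := fun h => by simp [h] at hz
  have hlog : log z = log (-z) + π / 2 * I * 2 := by
    rw [log, log, norm_neg, arg_neg_eq_arg_sub_pi_of_im_pos hz]
    push_cast
    ring
  rw [sqrtB, sqrtB, if_neg (neg_ne_zero.mpr hz0), if_neg hz0, neg_neg, hlog, add_div,
    mul_div_cancel_right₀ _ two_ne_zero, exp_add, exp_pi_div_two_mul_I]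
  ring

lemma arg_exp_I_mul {θ : ℝ} (hθ : θ ∈ Set.Ioc (-π) π) : (exp (I * θ)).arg = θ := by
  rw [mul_comm, exp_mul_I, arg_cos_add_sin_mul_I hθ]

lemma neg_mul_exp_I_mul_sub_ne_zero {r j θ : ℝ} (hr : 0 ≤ r) (hj : 0 < j)
    (hθ : θ ∈ Set.Ioo (-π) π) : -(r : ℂ) * exp (I * θ) - j ≠ 0 := by
  intro h
  have hre : -r * Real.cos θ - j = 0 := by
    simpa [mul_comm I, exp_mul_I, ← ofReal_cos, ← ofReal_sin] using congrArg re h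
  have him : r * Real.sin θ = 0 := by
    simpa [mul_comm I, exp_mul_I, ← ofReal_cos, ← ofReal_sin] using congrArg im h
  have hr0 : r ≠ 0 := by rintro rfl; linarith
  have hθ0 : θ = 0 := (Real.sin_eq_zero_iff_of_lt_of_lt hθ.1 hθ.2).mp
    ((mul_eq_zero.mp him).resolve_left hr0)
  rw [hθ0, Real.cos_zero] at hre
  linarith

noncomputable def tangentPlane (w : ℂ) : Submodule ℝ (ℂ × ℂ × ℂ) :=
  Submodule.span ℝ {(w, w, 0), (I * w, -I * w, 0)}

lemma tangentPlane_inf_tangentPlane_I_mul {w : ℂ} (hw : w ≠ 0) :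
    tangentPlane w ⊓ tangentPlane (I * w) = ⊥ := by
  rw [eq_bot_iff]
  rintro x ⟨hx₁, hx₂⟩
  obtain ⟨s, t, rfl⟩ := Submodule.mem_span_pair.mp hx₁
  obtain ⟨u, v, huv⟩ := Submodule.mem_span_pair.mp hx₂
  simp only [Prod.smul_mk, Prod.mk_add_mk, Prod.mk.injEq, real_smul] at huv
  obtain ⟨h₁, h₂, -⟩ := huv
  have e₁ : (s + t * I : ℂ) = u * I - v :=
    mul_right_cancel₀ hw (by linear_combination -h₁ + v * w * I_sq)
  have e₂ : (s - t * I : ℂ) = u * I + v :=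
    mul_right_cancel₀ hw (by linear_combination -h₂ - v * w * I_sq)
  obtain ⟨hs₁, ht₁⟩ : s = -v ∧ t = u := by simpa [Complex.ext_iff] using e₁
  obtain ⟨hs₂, ht₂⟩ : s = v ∧ -t = u := by simpa [Complex.ext_iff] using e₂
  obtain rfl : s = 0 := by linarith
  obtain rfl : t = 0 := by linarith
  simp

lemma prod_sqrtB_ne_zero {ι : Type*} {s : Finset ι} {g : ι → ℂ} (h : ∀ i ∈ s, g i ≠ 0) :
    ∏ i ∈ s, sqrtB (g i) ≠ 0 :=
  prod_ne_zero_iff.mpr fun i hi => sqrtB_ne_zero (h i hi)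

/-- The paper's `ξ(a)`, as a function of `θ = f(a)`. -/
noncomputable def xi (N r : ℕ) (θ : ℝ) : ℂ :=
  ∏ j ∈ Icc 1 N, sqrtB (-(r : ℂ) * exp (I * θ) - j)

lemma xi_ne_zero {N r : ℕ} {θ : ℝ} (hθ : θ ∈ Set.Ioo (-π) π) : xi N r θ ≠ 0 :=
  prod_sqrtB_ne_zero fun j hj => by
    have hj : (0 : ℝ) < j := by exact_mod_cast (mem_Icc.mp hj).1
    exact_mod_cast neg_mul_exp_I_mul_sub_ne_zero r.cast_nonneg hj hθ

lemma xi_eq_zero_of_exp_eq_neg_one {N r : ℕ} {θ : ℝ} (hr : r ∈ Icc 1 N)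
    (hθ : exp (I * θ) = -1) : xi N r θ = 0 :=
  prod_eq_zero hr (by rw [hθ, mul_neg_one, neg_neg, sub_self, sqrtB, if_pos rfl])

/-- The immersion `ι_r(a, e^{ib}) = (e^{ib}ξ(a), e^{-ib}ξ(a), -r e^{if(a)})` of the
sphere into `M_N` is injective (mod `b ↦ b + 2π`) away from the poles `a = ±π`; both
poles map to the point `(0, 0, r)`, so `ι_r` has exactly one double point; and the two
branch tangent planes there (spanned by `(ξ₊,ξ₊,0),(iξ₊,-iξ₊,0)` and
`(ξ₋,ξ₋,0),(iξ₋,-iξ₋,0)` with `ξ± = √(±ri)·∏_{k≠r}√(r-k)`) intersect trivially: the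
self-intersection is transverse. -/
theorem immersion_one_transverse_double_point (N r : ℕ) (hr : r ∈ Finset.Icc 1 N)
    (f : ℝ → ℝ) (hmono : StrictMonoOn f (Set.Icc (-Real.pi) Real.pi))
    (hfneg : f (-Real.pi) = -Real.pi) (hfpos : f Real.pi = Real.pi)
    (hfmem : ∀ a ∈ Set.Ioo (-Real.pi) Real.pi, f a ∈ Set.Ioo (-Real.pi) Real.pi) :
    let ξ : ℝ → ℂ := fun a =>
      ∏ j ∈ Finset.Icc 1 N, sqrtB (-(r : ℂ) * Complex.exp (Complex.I * (f a)) - (j : ℂ))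
    let ι : ℝ → ℝ → ℂ × ℂ × ℂ := fun a b =>
      (Complex.exp (Complex.I * b) * ξ a, Complex.exp (-(Complex.I) * b) * ξ a,
        -(r : ℂ) * Complex.exp (Complex.I * (f a)))
    (∀ a₁ ∈ Set.Ioo (-Real.pi) Real.pi, ∀ a₂ ∈ Set.Ioo (-Real.pi) Real.pi, ∀ b₁ b₂ : ℝ,
        ι a₁ b₁ = ι a₂ b₂ →
          a₁ = a₂ ∧ Complex.exp (Complex.I * b₁) = Complex.exp (Complex.I * b₂)) ∧
    (∀ b₁ b₂ : ℝ, ι Real.pi b₁ = ((0 : ℂ), (0 : ℂ), (r : ℂ)) ∧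
        ι (-Real.pi) b₂ = ((0 : ℂ), (0 : ℂ), (r : ℂ))) ∧
    (let c : ℂ := ∏ k ∈ (Finset.Icc 1 N).erase r, sqrtB ((r : ℂ) - (k : ℂ))
     let ξp : ℂ := sqrtB ((r : ℂ) * Complex.I) * c
     let ξm : ℂ := sqrtB (-((r : ℂ) * Complex.I)) * c
     Submodule.span ℝ ({(ξp, ξp, 0), (Complex.I * ξp, -(Complex.I) * ξp, 0)} :
          Set (ℂ × ℂ × ℂ)) ⊓
        Submodule.span ℝ ({(ξm, ξm, 0), (Complex.I * ξm, -(Complex.I) * ξm, 0)} :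
          Set (ℂ × ℂ × ℂ)) = ⊥) := by
  intro ξ ι
  have hr₀ : (0 : ℝ) < r := by exact_mod_cast (mem_Icc.mp hr).1
  have hrC : (r : ℂ) ≠ 0 := by exact_mod_cast hr₀.ne'
  refine ⟨?_, ?_, ?_⟩
  · intro a₁ ha₁ a₂ ha₂ b₁ b₂ h
    simp only [ι, Prod.mk.injEq] at h
    obtain ⟨h₁, -, h₃⟩ := h
    have hf : f a₁ = f a₂ := by
      rw [← arg_exp_I_mul (Set.Ioo_subset_Ioc_self (hfmem a₁ ha₁)),
        ← arg_exp_I_mul (Set.Ioo_subset_Ioc_self (hfmem a₂ ha₂)),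
        mul_left_cancel₀ (neg_ne_zero.mpr hrC) h₃]
    obtain rfl : a₁ = a₂ :=
      hmono.injOn (Set.Ioo_subset_Icc_self ha₁) (Set.Ioo_subset_Icc_self ha₂) hf
    exact ⟨rfl, mul_right_cancel₀ (xi_ne_zero (hfmem a₁ ha₁)) h₁⟩
  · have hpole : ∀ a, exp (I * f a) = -1 → ∀ b, ι a b = ((0 : ℂ), (0 : ℂ), (r : ℂ)) := fun a ha b => by
      have hξ : ξ a = 0 := xi_eq_zero_of_exp_eq_neg_one hr ha
      simp only [ι, hξ, ha, mul_zero, mul_neg_one, neg_neg]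
    refine fun b₁ b₂ => ⟨hpole π ?_ b₁, hpole (-π) ?_ b₂⟩
    · rw [hfpos, mul_comm, exp_pi_mul_I]
    · rw [hfneg, ofReal_neg, mul_neg, mul_comm, exp_neg_pi_mul_I]
  · intro c ξp ξm
    have hξm : ξm = I * ξp := by
      change sqrtB (-((r : ℂ) * I)) * c = I * (sqrtB ((r : ℂ) * I) * c)
      rw [sqrtB_neg_of_im_pos (by simpa using hr₀), mul_assoc]
    have hξp : ξp ≠ 0 := mul_ne_zero (sqrtB_ne_zero (mul_ne_zero hrC I_ne_zero))
      (prod_sqrtB_ne_zero fun k hk => sub_ne_zero.mpr (by exact_mod_cast (ne_of_mem_erase hk).symm))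
    rw [hξm]
    exact tangentPlane_inf_tangentPlane_I_mul hξp
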